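/- (The evanescent field does not contribute to the far-field pattern.) Let k > 0, R₀ > 0, M ≥ 0 and κ > 0, and let q : ℝ² → ℂ be differentiable on {x : ‖x‖ > R₀} with ‖q(x)‖ ≤ M·exp(−κ‖x‖) and ‖fderiv ℝ q x‖ ≤ M·exp(−κ‖x‖) for all ‖x‖ > R₀. Then for every unit vector x̂ ∈ ℝ², the far-field functional of q over the circle of radius R tends to zero: FF_R(q, x̂) → 0 as R → ∞. -/

import Mathlib

noncomputable section

open MeasureTheory Filter

/-- The point `R·(cos θ, sin θ)` on the circle of radius `R`. -/
def circPt (R θ : ℝ) : EuclideanSpace ℝ (Fin 2) :=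
  (WithLp.equiv 2 (Fin 2 → ℝ)).symm ![R * Real.cos θ, R * Real.sin θ]

/-- The far-field functional
`FF_R(p, x̂) = ∫_{∂B_R} ( p ∂_ν e^{−ik x̂·y} − ∂_ν p e^{−ik x̂·y} ) ds`,
expressed as a parametrized integral over the circle of radius `R`. -/
def FF (k R : ℝ) (p : EuclideanSpace ℝ (Fin 2) → ℂ) (xhat : EuclideanSpace ℝ (Fin 2)) : ℂ :=
  ∫ θ in (0 : ℝ)..(2 * Real.pi),
    (p (circPt R θ) * (-Complex.I * (k : ℂ) * ((inner ℝ xhat (circPt 1 θ) : ℝ) : ℂ))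
          * Complex.exp (-Complex.I * (k : ℂ) * ((inner ℝ xhat (circPt R θ) : ℝ) : ℂ))
        - (fderiv ℝ p (circPt R θ) (circPt 1 θ))
          * Complex.exp (-Complex.I * (k : ℂ) * ((inner ℝ xhat (circPt R θ) : ℝ) : ℂ))) * (R : ℂ)

/-! On the circle of radius `R` the plane wave `e^{−ik x̂·y}` is unimodular, so
`|FF_R(q, x̂)| ≤ 2πR (|k| ‖x̂‖ + 1) M e^{−κR}`: the exponential decay of `q` and `∇q` beats the
linear growth of the length of the circle. -/

open scoped Topology

lemma norm_circPt (R θ : ℝ) : ‖circPt R θ‖ = |R| := by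
  have h : ‖circPt R θ‖ = Real.sqrt ((R * Real.cos θ) ^ 2 + (R * Real.sin θ) ^ 2) := by
    simp [circPt, EuclideanSpace.norm_eq, Fin.sum_univ_two, sq_abs]
  rw [h, mul_pow, mul_pow, ← mul_add, Real.cos_sq_add_sin_sq, mul_one, Real.sqrt_sq_eq_abs]

lemma norm_circPt_one (θ : ℝ) : ‖circPt 1 θ‖ = 1 := by
  rw [norm_circPt, abs_one]

lemma norm_exp_neg_I_mul_ofReal (k r : ℝ) :
    ‖Complex.exp (-Complex.I * (k : ℂ) * (r : ℂ))‖ = 1 := by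
  rw [Complex.norm_exp]; simp

lemma norm_neg_I_mul_inner_circPt_one_le (k θ : ℝ) (xhat : EuclideanSpace ℝ (Fin 2)) :
    ‖-Complex.I * (k : ℂ) * ((inner ℝ xhat (circPt 1 θ) : ℝ) : ℂ)‖ ≤ |k| * ‖xhat‖ := by
  have hinner : |inner ℝ xhat (circPt 1 θ)| ≤ ‖xhat‖ := by
    simpa [norm_circPt_one] using abs_real_inner_le_norm xhat (circPt 1 θ)
  simpa using mul_le_mul_of_nonneg_left hinner (abs_nonneg k)

lemma norm_FF_le {k R B : ℝ} (hR : 0 ≤ R) {p : EuclideanSpace ℝ (Fin 2) → ℂ}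
    (xhat : EuclideanSpace ℝ (Fin 2)) (hp : ∀ θ, ‖p (circPt R θ)‖ ≤ B)
    (hDp : ∀ θ, ‖fderiv ℝ p (circPt R θ)‖ ≤ B) :
    ‖FF k R p xhat‖ ≤ (|k| * ‖xhat‖ + 1) * B * R * (2 * Real.pi) := by
  refine (intervalIntegral.norm_integral_le_of_norm_le_const fun θ _ => ?_).trans_eq
    (by rw [sub_zero, abs_of_pos Real.two_pi_pos])
  set e := Complex.exp (-Complex.I * (k : ℂ) * ((inner ℝ xhat (circPt R θ) : ℝ) : ℂ))
  set c := -Complex.I * (k : ℂ) * ((inner ℝ xhat (circPt 1 θ) : ℝ) : ℂ)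
  have hDp_nu : ‖fderiv ℝ p (circPt R θ) (circPt 1 θ)‖ ≤ B := by
    simpa [norm_circPt_one] using (fderiv ℝ p (circPt R θ)).le_of_opNorm_le (hDp θ) (circPt 1 θ)
  have hB : 0 ≤ B := (norm_nonneg _).trans (hp θ)
  calc ‖(p (circPt R θ) * c * e - fderiv ℝ p (circPt R θ) (circPt 1 θ) * e) * (R : ℂ)‖
      = ‖p (circPt R θ) * c - fderiv ℝ p (circPt R θ) (circPt 1 θ)‖ * R := by
        rw [← sub_mul, norm_mul, norm_mul, norm_exp_neg_I_mul_ofReal, mul_one,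
          Complex.norm_real, Real.norm_of_nonneg hR]
    _ ≤ (B * (|k| * ‖xhat‖) + B) * R := by
        gcongr
        refine (norm_sub_le _ _).trans (add_le_add ?_ hDp_nu)
        rw [norm_mul]
        exact mul_le_mul (hp θ) (norm_neg_I_mul_inner_circPt_one_le k θ xhat) (norm_nonneg _) hB
    _ = (|k| * ‖xhat‖ + 1) * B * R := by ring

lemma tendsto_mul_exp_neg_mul_atTop_nhds_zero {κ : ℝ} (hκ : 0 < κ) :
    Tendsto (fun R => R * Real.exp (-κ * R)) atTop (𝓝 0) := by
  have h := ((Real.tendsto_pow_mul_exp_neg_atTop_nhds_zero 1).comp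
    (tendsto_id.const_mul_atTop hκ)).const_mul κ⁻¹
  rw [mul_zero] at h
  refine h.congr fun R => ?_
  simp only [Function.comp_apply, id, pow_one]
  rw [mul_assoc, inv_mul_cancel_left₀ hκ.ne', neg_mul]

theorem evanescent_no_farfield_general (k R₀ M κ : ℝ) (hκ : 0 < κ) (q : EuclideanSpace ℝ (Fin 2) → ℂ)
    (hqb : ∀ x : EuclideanSpace ℝ (Fin 2), R₀ < ‖x‖ → ‖q x‖ ≤ M * Real.exp (-κ * ‖x‖))
    (hqd : ∀ x : EuclideanSpace ℝ (Fin 2), R₀ < ‖x‖ →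
      ‖fderiv ℝ q x‖ ≤ M * Real.exp (-κ * ‖x‖))
    (xhat : EuclideanSpace ℝ (Fin 2)) :
    Tendsto (fun R => FF k R q xhat) atTop (nhds 0) := by
  rw [tendsto_zero_iff_norm_tendsto_zero]
  have hdecay := (tendsto_mul_exp_neg_mul_atTop_nhds_zero hκ).const_mul
    ((|k| * ‖xhat‖ + 1) * M * (2 * Real.pi))
  rw [mul_zero] at hdecay
  refine squeeze_zero' (.of_forall fun R => norm_nonneg _) ?_ hdecay
  filter_upwards [eventually_gt_atTop (max R₀ 0)] with R hR
  have hR0 : 0 < R := (le_max_right _ _).trans_lt hR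
  have hnorm : ∀ θ, ‖circPt R θ‖ = R := fun θ => by rw [norm_circPt, abs_of_pos hR0]
  have hfar : ∀ θ, R₀ < ‖circPt R θ‖ := fun θ => (hnorm θ).symm ▸ (le_max_left _ _).trans_lt hR
  refine (norm_FF_le hR0.le xhat (B := M * Real.exp (-κ * R)) (fun θ => ?_) (fun θ => ?_)).trans_eq
    (by ring)
  · simpa only [hnorm] using hqb _ (hfar θ)
  · simpa only [hnorm] using hqd _ (hfar θ)

/-- An exponentially decaying evanescent field does not contribute to
the far-field pattern: `FF_R(q, x̂) → 0` as `R → ∞`. -/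
theorem evanescent_no_farfield (k R₀ M κ : ℝ) (hk : 0 < k) (hR₀ : 0 < R₀)
    (hM : 0 ≤ M) (hκ : 0 < κ) (q : EuclideanSpace ℝ (Fin 2) → ℂ)
    (hq : ∀ x : EuclideanSpace ℝ (Fin 2), R₀ < ‖x‖ → DifferentiableAt ℝ q x)
    (hqb : ∀ x : EuclideanSpace ℝ (Fin 2), R₀ < ‖x‖ → ‖q x‖ ≤ M * Real.exp (-κ * ‖x‖))
    (hqd : ∀ x : EuclideanSpace ℝ (Fin 2), R₀ < ‖x‖ →
      ‖fderiv ℝ q x‖ ≤ M * Real.exp (-κ * ‖x‖))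
    (xhat : EuclideanSpace ℝ (Fin 2)) (hxhat : ‖xhat‖ = 1) :
    Tendsto (fun R => FF k R q xhat) atTop (nhds 0) :=
  evanescent_no_farfield_general k R₀ M κ hκ q hqb hqd xhat
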